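/- arXiv:0810.2001 — 2 statements merged into one kernel-verified Lean document; each statement's English description precedes it below -/
import Mathlib

section
/- In the universal enveloping algebra H = U(gl_2 ⋉ (k^2 ⊕ (k^2)*)), the element d = τ(y_1 x - x_1 y) - (2 e y_1 y + h(y_1 x + x_1 y) - 2 f x_1 x) is central. -/
/-!
Since the eight generators generate the algebra, it suffices that `d` commutes with each of them.
For `g ∈ gl₂` this holds because `t = τ` is central in `gl₂` and both `y₁x - x₁y` and
`2e y₁y + h(y₁x + x₁y) - 2f x₁x` are `gl₂`-invariant. For `v ∈ V`, which is abelian, only the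
brackets of `t, e, h, f` with `v` survive in `⁅d, v⁆`, and the resulting cubic monomials in the
commuting variables `x, y, x₁, y₁` cancel.
-/

theorem Subalgebra.mem_center_of_adjoin_eq_top {R A : Type*} [CommSemiring R] [Semiring A]
    [Algebra R A] {s : Set A} (hs : Algebra.adjoin R s = ⊤) {z : A}
    (hz : ∀ a ∈ s, Commute z a) : z ∈ Subalgebra.center R A :=
  Subalgebra.mem_center_iff.mpr fun _ =>
    (Algebra.commute_of_mem_adjoin_of_forall_mem_commute (hs ▸ Algebra.mem_top) hz).eq.symm

section

attribute [local instance] LieRing.ofAssociativeRing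

variable {A : Type*} [Ring A]

theorem Ring.lie_mul (a b c : A) : ⁅a, b * c⁆ = ⁅a, b⁆ * c + b * ⁅a, c⁆ := by
  simp only [Ring.lie_def]; noncomm_ring

theorem Ring.mul_lie (a b c : A) : ⁅a * b, c⁆ = a * ⁅b, c⁆ + ⁅a, c⁆ * b := by
  simp only [Ring.lie_def]; noncomm_ring

namespace Gl2Semidirect

structure Relations (e f h t x y x₁ y₁ : A) : Prop where
  lie_h_e : ⁅h, e⁆ = 2 * e
  lie_h_f : ⁅h, f⁆ = -(2 * f)
  lie_e_f : ⁅e, f⁆ = h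
  lie_t_e : ⁅t, e⁆ = 0
  lie_t_f : ⁅t, f⁆ = 0
  lie_t_h : ⁅t, h⁆ = 0
  lie_e_x : ⁅e, x⁆ = 0
  lie_e_y : ⁅e, y⁆ = x
  lie_f_x : ⁅f, x⁆ = y
  lie_f_y : ⁅f, y⁆ = 0
  lie_h_x : ⁅h, x⁆ = x
  lie_h_y : ⁅h, y⁆ = -y
  lie_t_x : ⁅t, x⁆ = x
  lie_t_y : ⁅t, y⁆ = y
  lie_e_x₁ : ⁅e, x₁⁆ = 0
  lie_e_y₁ : ⁅e, y₁⁆ = x₁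
  lie_f_x₁ : ⁅f, x₁⁆ = y₁
  lie_f_y₁ : ⁅f, y₁⁆ = 0
  lie_h_x₁ : ⁅h, x₁⁆ = x₁
  lie_h_y₁ : ⁅h, y₁⁆ = -y₁
  lie_t_x₁ : ⁅t, x₁⁆ = -x₁
  lie_t_y₁ : ⁅t, y₁⁆ = -y₁
  lie_x_y : ⁅x, y⁆ = 0
  lie_x_x₁ : ⁅x, x₁⁆ = 0
  lie_x_y₁ : ⁅x, y₁⁆ = 0
  lie_y_x₁ : ⁅y, x₁⁆ = 0
  lie_y_y₁ : ⁅y, y₁⁆ = 0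
  lie_x₁_y₁ : ⁅x₁, y₁⁆ = 0

def centralElement (e f h t x y x₁ y₁ : A) : A :=
  t * (y₁ * x - x₁ * y) - (2 * e * (y₁ * y) + h * (y₁ * x + x₁ * y) - 2 * f * (x₁ * x))

namespace Relations

variable {e f h t x y x₁ y₁ : A}

theorem lie_e_h (R : Relations e f h t x y x₁ y₁) : ⁅e, h⁆ = -(2 * e) := by
  rw [← lie_skew, R.lie_h_e]

theorem lie_f_h (R : Relations e f h t x y x₁ y₁) : ⁅f, h⁆ = 2 * f := by
  rw [← lie_skew, R.lie_h_f, neg_neg]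

theorem lie_f_e (R : Relations e f h t x y x₁ y₁) : ⁅f, e⁆ = -h := by
  rw [← lie_skew, R.lie_e_f]

theorem lie_e_t (R : Relations e f h t x y x₁ y₁) : ⁅e, t⁆ = 0 := by
  rw [← lie_skew, R.lie_t_e, neg_zero]

theorem lie_f_t (R : Relations e f h t x y x₁ y₁) : ⁅f, t⁆ = 0 := by
  rw [← lie_skew, R.lie_t_f, neg_zero]

theorem lie_h_t (R : Relations e f h t x y x₁ y₁) : ⁅h, t⁆ = 0 := by
  rw [← lie_skew, R.lie_t_h, neg_zero]

theorem commute_y_x (R : Relations e f h t x y x₁ y₁) : Commute y x :=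
  (commute_iff_lie_eq.mpr R.lie_x_y).symm

theorem commute_x₁_x (R : Relations e f h t x y x₁ y₁) : Commute x₁ x :=
  (commute_iff_lie_eq.mpr R.lie_x_x₁).symm

theorem commute_y₁_x (R : Relations e f h t x y x₁ y₁) : Commute y₁ x :=
  (commute_iff_lie_eq.mpr R.lie_x_y₁).symm

theorem commute_x₁_y (R : Relations e f h t x y x₁ y₁) : Commute x₁ y :=
  (commute_iff_lie_eq.mpr R.lie_y_x₁).symm

theorem commute_y₁_y (R : Relations e f h t x y x₁ y₁) : Commute y₁ y :=
  (commute_iff_lie_eq.mpr R.lie_y_y₁).symm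

theorem commute_y₁_x₁ (R : Relations e f h t x y x₁ y₁) : Commute y₁ x₁ :=
  (commute_iff_lie_eq.mpr R.lie_x₁_y₁).symm

theorem lie_centralElement (R : Relations e f h t x y x₁ y₁) {g : A}
    (hg : g ∈ ({e, f, h, t} : Set A)) :
    ⁅g, centralElement e f h t x y x₁ y₁⁆ = 0 := by
  simp only [Set.mem_insert_iff, Set.mem_singleton_iff] at hg
  rcases hg with rfl | rfl | rfl | rfl <;>
  simp only [centralElement, two_mul, lie_sub, lie_add, Ring.lie_mul, add_mul,
    lie_self, R.lie_h_e, R.lie_h_f, R.lie_e_f, R.lie_t_e, R.lie_t_f, R.lie_t_h,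
    R.lie_e_h, R.lie_f_h, R.lie_f_e, R.lie_e_t, R.lie_f_t, R.lie_h_t,
    R.lie_e_x, R.lie_e_y, R.lie_f_x, R.lie_f_y, R.lie_h_x, R.lie_h_y, R.lie_t_x, R.lie_t_y,
    R.lie_e_x₁, R.lie_e_y₁, R.lie_f_x₁, R.lie_f_y₁, R.lie_h_x₁, R.lie_h_y₁, R.lie_t_x₁,
    R.lie_t_y₁] <;>
  noncomm_ring

theorem centralElement_lie (R : Relations e f h t x y x₁ y₁) {v : A}
    (hv : v ∈ ({x, y, x₁, y₁} : Set A)) :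
    ⁅centralElement e f h t x y x₁ y₁, v⁆ = 0 := by
  simp only [Set.mem_insert_iff, Set.mem_singleton_iff] at hv
  rcases hv with rfl | rfl | rfl | rfl <;>
  simp only [centralElement, two_mul, sub_lie, add_lie, Ring.mul_lie, lie_self,
    R.lie_t_x, R.lie_e_x, R.lie_h_x, R.lie_f_x, R.lie_t_y, R.lie_e_y, R.lie_h_y, R.lie_f_y,
    R.lie_t_x₁, R.lie_e_x₁, R.lie_h_x₁, R.lie_f_x₁, R.lie_t_y₁, R.lie_e_y₁, R.lie_h_y₁, R.lie_f_y₁,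
    R.lie_x_y, R.lie_x_x₁, R.lie_x_y₁, R.lie_y_x₁, R.lie_y_y₁, R.lie_x₁_y₁,
    R.commute_y_x.lie_eq, R.commute_x₁_x.lie_eq, R.commute_y₁_x.lie_eq, R.commute_x₁_y.lie_eq,
    R.commute_y₁_y.lie_eq, R.commute_y₁_x₁.lie_eq, mul_zero, zero_mul, add_zero, zero_add] <;>
  -- sort the remaining cubic monomials in `V` by `x < y < x₁ < y₁`
  simp only [mul_sub, mul_add, add_mul, neg_mul,
    R.commute_x₁_x.eq, R.commute_y₁_x.eq, R.commute_x₁_y.eq, R.commute_y₁_y.eq,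
    R.commute_y₁_x₁.eq, R.commute_y_x.left_comm, R.commute_x₁_x.left_comm,
    R.commute_y₁_x.left_comm, R.commute_x₁_y.left_comm, R.commute_y₁_y.left_comm] <;>
  abel

theorem centralElement_mem_center (R : Relations e f h t x y x₁ y₁) {k : Type*} [CommSemiring k]
    [Algebra k A] (hgen : Algebra.adjoin k ({e, f, h, t, x, y, x₁, y₁} : Set A) = ⊤) :
    centralElement e f h t x y x₁ y₁ ∈ Subalgebra.center k A := by
  refine Subalgebra.mem_center_of_adjoin_eq_top hgen fun g hg => ?_
  obtain hgl | hV : g ∈ ({e, f, h, t} : Set A) ∨ g ∈ ({x, y, x₁, y₁} : Set A) := by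
    simpa only [Set.mem_insert_iff, Set.mem_singleton_iff, or_assoc] using hg
  · exact (commute_iff_lie_eq.mpr (R.lie_centralElement hgl)).symm
  · exact commute_iff_lie_eq.mpr (R.centralElement_lie hV)

end Relations

end Gl2Semidirect

end

theorem stmt3_general {k : Type} [Field k] {A : Type} [Ring A] [Algebra k A]
    (ee ff hh tt xx yy x1 y1 : A)
    (hHE : ⁅hh, ee⁆ = 2*ee) (hHF : ⁅hh, ff⁆ = -(2*ff)) (hEF : ⁅ee, ff⁆ = hh)
    (hTE : ⁅tt, ee⁆ = 0) (hTF : ⁅tt, ff⁆ = 0) (hTH : ⁅tt, hh⁆ = 0)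
    (hEX : ⁅ee, xx⁆ = 0) (hEY : ⁅ee, yy⁆ = xx)
    (hFX : ⁅ff, xx⁆ = yy) (hFY : ⁅ff, yy⁆ = 0)
    (hHX : ⁅hh, xx⁆ = xx) (hHY : ⁅hh, yy⁆ = -yy)
    (hTX : ⁅tt, xx⁆ = xx) (hTY : ⁅tt, yy⁆ = yy)
    (hEX1 : ⁅ee, x1⁆ = 0) (hEY1 : ⁅ee, y1⁆ = x1)
    (hFX1 : ⁅ff, x1⁆ = y1) (hFY1 : ⁅ff, y1⁆ = 0)
    (hHX1 : ⁅hh, x1⁆ = x1) (hHY1 : ⁅hh, y1⁆ = -y1)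
    (hTX1 : ⁅tt, x1⁆ = -x1) (hTY1 : ⁅tt, y1⁆ = -y1)
    (hXY : ⁅xx, yy⁆ = 0) (hXX1 : ⁅xx, x1⁆ = 0) (hXY1 : ⁅xx, y1⁆ = 0)
    (hYX1 : ⁅yy, x1⁆ = 0) (hYY1 : ⁅yy, y1⁆ = 0) (hX1Y1 : ⁅x1, y1⁆ = 0)
    (hgen : Algebra.adjoin k ({ee, ff, hh, tt, xx, yy, x1, y1} : Set A) = ⊤)
    :
    (tt*(y1*xx - x1*yy) - (2*ee*(y1*yy) + hh*(y1*xx + x1*yy) - 2*ff*(x1*xx))) ∈ Subalgebra.center k A :=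
  Gl2Semidirect.Relations.centralElement_mem_center
    ⟨hHE, hHF, hEF, hTE, hTF, hTH, hEX, hEY, hFX, hFY, hHX, hHY, hTX, hTY, hEX1, hEY1, hFX1, hFY1,
      hHX1, hHY1, hTX1, hTY1, hXY, hXX1, hXY1, hYX1, hYY1, hX1Y1⟩ hgen

theorem stmt3 {k : Type} [Field k] [CharZero k] {A : Type} [Ring A] [Algebra k A]
    (ee ff hh tt xx yy x1 y1 : A)
    (hHE : ⁅hh, ee⁆ = 2*ee) (hHF : ⁅hh, ff⁆ = -(2*ff)) (hEF : ⁅ee, ff⁆ = hh)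
    (hTE : ⁅tt, ee⁆ = 0) (hTF : ⁅tt, ff⁆ = 0) (hTH : ⁅tt, hh⁆ = 0)
    (hEX : ⁅ee, xx⁆ = 0) (hEY : ⁅ee, yy⁆ = xx)
    (hFX : ⁅ff, xx⁆ = yy) (hFY : ⁅ff, yy⁆ = 0)
    (hHX : ⁅hh, xx⁆ = xx) (hHY : ⁅hh, yy⁆ = -yy)
    (hTX : ⁅tt, xx⁆ = xx) (hTY : ⁅tt, yy⁆ = yy)
    (hEX1 : ⁅ee, x1⁆ = 0) (hEY1 : ⁅ee, y1⁆ = x1)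
    (hFX1 : ⁅ff, x1⁆ = y1) (hFY1 : ⁅ff, y1⁆ = 0)
    (hHX1 : ⁅hh, x1⁆ = x1) (hHY1 : ⁅hh, y1⁆ = -y1)
    (hTX1 : ⁅tt, x1⁆ = -x1) (hTY1 : ⁅tt, y1⁆ = -y1)
    (hXY : ⁅xx, yy⁆ = 0) (hXX1 : ⁅xx, x1⁆ = 0) (hXY1 : ⁅xx, y1⁆ = 0)
    (hYX1 : ⁅yy, x1⁆ = 0) (hYY1 : ⁅yy, y1⁆ = 0) (hX1Y1 : ⁅x1, y1⁆ = 0)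
    (hgen : Algebra.adjoin k ({ee, ff, hh, tt, xx, yy, x1, y1} : Set A) = ⊤)
    (hPBW : LinearIndependent k (fun m : Fin 8 → ℕ =>
      ee ^ m 0 * ff ^ m 1 * hh ^ m 2 * tt ^ m 3 * xx ^ m 4 * yy ^ m 5 * x1 ^ m 6 * y1 ^ m 7))
    :
    (tt*(y1*xx - x1*yy) - (2*ee*(y1*yy) + hh*(y1*xx + x1*yy) - 2*ff*(x1*xx))) ∈ Subalgebra.center k A :=
  stmt3_general ee ff hh tt xx yy x1 y1 hHE hHF hEF hTE hTF hTH hEX hEY hFX hFY hHX hHY hTX hTY hEX1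
    hEY1 hFX1 hFY1 hHX1 hHY1 hTX1 hTY1 hXY hXX1 hXY1 hYX1 hYY1 hX1Y1 hgen
end

section
/- In the infinitesimal Cherednik algebra H_c of gl_2, the commutator of d = τ(y_1x - x_1y) - (2ey_1y + h(x_1y + y_1x) - 2fx_1x) with x satisfies [d, x] = [τc + (3/2)c, x] - (cx + (1/2)[Δ, [c,x]]). -/
/-!
Since `⁅·, x⁆` is a derivation, `⁅d, x⁆` expands into `τ⁅c, x⁆` plus a remainder `R` that is
linear in `P = ⁅y₁, x⁆`, `N = ⁅x₁, x⁆` and `M = ⁅x₁, y⁆`; the one reordering it needs,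
`y x₁ x - x x₁ y = N y - M x`, comes from `⁅x, y⁆ = 0`. On the other side `⁅τ, x⁆ = x` turns the
right-hand side into `τ⁅c, x⁆ + ½ (⁅c, x⁆ - ⁅Δ, ⁅c, x⁆⁆)`. Now `⁅c, x⁆ = P x - N y` with `P`, `N`
in the centralizer of `Δ`, so `⁅Δ, ⁅c, x⁆⁆ = P ⁅Δ, x⁆ - N ⁅Δ, y⁆`, and the formulas for `⁅Δ, x⁆`,
`⁅Δ, y⁆` on the standard representation `(x, y)` of `sl₂` show that `⁅c, x⁆ - ⁅Δ, ⁅c, x⁆⁆ = 2 R`.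
-/

section

-- Only for the Lie-ring API (`add_lie`, `lie_skew`, ...): while active, `⁅a, b⁆` would elaborate
-- through this instance rather than `Ring.bracket`, so it must be off for the main statement.
attribute [local instance] LieRing.ofAssociativeRing

namespace Ring

variable {A : Type*} [Ring A]

theorem mul_lie_s13 (a b c : A) : ⁅a * b, c⁆ = a * ⁅b, c⁆ + ⁅a, c⁆ * b := by
  simp only [lie_def]; noncomm_ring

theorem lie_mul_s13 (a b c : A) : ⁅a, b * c⁆ = ⁅a, b⁆ * c + b * ⁅a, c⁆ := by
  simp only [lie_def]; noncomm_ring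

theorem ofNat_lie (n : ℕ) [n.AtLeastTwo] (a : A) : ⁅(no_index (OfNat.ofNat n : A)), a⁆ = 0 :=
  commute_iff_lie_eq.mp (Commute.ofNat_left n a)

theorem mul_eq_mul_sub_of_lie_eq {a b c : A} (h : ⁅a, b⁆ = c) : b * a = a * b - c := by
  rw [← h, lie_def]; abel

theorem lie_mul_of_commute {a b : A} (hab : Commute a b) (c : A) : ⁅a, b * c⁆ = b * ⁅a, c⁆ := by
  rw [lie_mul_s13, commute_iff_lie_eq.mp hab, zero_mul, zero_add]

end Ring

open Ring

section Sl2

variable {A : Type*} [Ring A] {e f h : A}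

def casimir (e f h : A) : A := 4 * f * e + h * h + 2 * h

theorem commute_casimir_h (hhe : ⁅h, e⁆ = 2 * e) (hhf : ⁅h, f⁆ = -(2 * f)) :
    Commute (casimir e f h) h := by
  rw [commute_iff_lie_eq, casimir]
  simp only [add_lie, mul_lie_s13, lie_self, ofNat_lie, ← lie_skew e h, ← lie_skew f h, hhe, hhf]
  noncomm_ring

theorem commute_casimir_e (hhe : ⁅h, e⁆ = 2 * e) (hef : ⁅e, f⁆ = h) :
    Commute (casimir e f h) e := by
  rw [commute_iff_lie_eq, casimir]
  simp only [add_lie, mul_lie_s13, lie_self, ofNat_lie, ← lie_skew f e, hhe, hef, mul_assoc]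
  rw [mul_eq_mul_sub_of_lie_eq hhe]
  noncomm_ring

theorem commute_casimir_of_commute {u : A} (hue : Commute u e) (huf : Commute u f)
    (huh : Commute u h) : Commute (casimir e f h) u := by
  unfold casimir
  exact (((Commute.ofNat_left 4 u).mul_left huf.symm).mul_left hue.symm).add_left
    (huh.symm.mul_left huh.symm) |>.add_left ((Commute.ofNat_left 2 u).mul_left huh.symm)

theorem casimir_lie_x {x y : A} (hex : ⁅e, x⁆ = 0) (hey : ⁅e, y⁆ = x) (hfx : ⁅f, x⁆ = y)
    (hhx : ⁅h, x⁆ = x) : ⁅casimir e f h, x⁆ = (2 * h - 3) * x + 4 * e * y := by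
  unfold casimir
  simp only [add_lie, mul_lie_s13, ofNat_lie, hex, hfx, hhx, mul_assoc]
  rw [mul_eq_mul_sub_of_lie_eq hey, mul_eq_mul_sub_of_lie_eq hhx]
  noncomm_ring

theorem casimir_lie_y {x y : A} (hey : ⁅e, y⁆ = x) (hfy : ⁅f, y⁆ = 0) (hhy : ⁅h, y⁆ = -y) :
    ⁅casimir e f h, y⁆ = 4 * f * x - (2 * h + 3) * y := by
  unfold casimir
  simp only [add_lie, mul_lie_s13, ofNat_lie, hey, hfy, hhy, neg_mul, mul_assoc]
  rw [mul_eq_mul_sub_of_lie_eq hhy]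
  noncomm_ring

theorem sub_casimir_lie_eq {x y F G P N M : A} (hhe : ⁅h, e⁆ = 2 * e)
    (hhf : ⁅h, f⁆ = -(2 * f)) (hef : ⁅e, f⁆ = h) (hex : ⁅e, x⁆ = 0) (hey : ⁅e, y⁆ = x)
    (hfx : ⁅f, x⁆ = y) (hfy : ⁅f, y⁆ = 0) (hhx : ⁅h, x⁆ = x) (hhy : ⁅h, y⁆ = -y)
    (hFe : Commute F e) (hFf : Commute F f) (hFh : Commute F h)
    (hGe : Commute G e) (hGf : Commute G f) (hGh : Commute G h)
    (hP : P = 2 * h * F + G) (hN : N = -(4 * e * F)) (hM : M = 2 * h * F - G) :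
    P * x - N * y - ⁅casimir e f h, P * x - N * y⁆ =
      2 • (2 * (N * y - M * x) - 2 * e * (P * y) - h * (P * x + N * y) + 2 * f * (N * x)) := by
  have hΔh := commute_casimir_h hhe hhf
  have hΔP : Commute (casimir e f h) P := by
    rw [hP]
    exact (((Commute.ofNat_right _ 2).mul_right hΔh).mul_right
      (commute_casimir_of_commute hFe hFf hFh)).add_right
      (commute_casimir_of_commute hGe hGf hGh)
  have hΔN : Commute (casimir e f h) N := by
    rw [hN]
    exact (((Commute.ofNat_right _ 4).mul_right (commute_casimir_e hhe hef)).mul_right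
      (commute_casimir_of_commute hFe hFf hFh)).neg_right
  have hPM : P + M = 4 * h * F := by rw [hP, hM]; noncomm_ring
  have hPh : ⁅P, h⁆ = 0 := by
    rw [hP, ← commute_iff_lie_eq]
    exact (((Commute.ofNat_left 2 h).mul_left (Commute.refl h)).mul_left hFh).add_left hGh
  have hPe : ⁅P, e⁆ = 4 * e * F := by
    rw [hP]
    simp only [add_lie, mul_lie_s13, ofNat_lie, hhe, commute_iff_lie_eq.mp hFe,
      commute_iff_lie_eq.mp hGe]
    noncomm_ring
  have hNf : ⁅N, f⁆ = -(4 * h * F) := by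
    rw [hN]
    simp only [neg_lie, mul_lie_s13, ofNat_lie, hef, commute_iff_lie_eq.mp hFf]
    noncomm_ring
  have hNh : ⁅N, h⁆ = 8 * e * F := by
    rw [hN]
    simp only [neg_lie, mul_lie_s13, ofNat_lie, ← lie_skew e h, hhe, commute_iff_lie_eq.mp hFh]
    noncomm_ring
  rw [lie_sub, lie_mul_of_commute hΔP, lie_mul_of_commute hΔN, casimir_lie_x hex hey hfx hhx,
    casimir_lie_y hey hfy hhy]
  -- an identity for arbitrary `P`, `N`, `M`; their shape enters only through the brackets above
  calc _ = 2 • (2 * (N * y - M * x) - 2 * e * (P * y) - h * (P * x + N * y) + 2 * f * (N * x))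
        + 4 * (P + M) * x - 2 * ⁅P, h⁆ * x - 4 * ⁅P, e⁆ * y + 4 * ⁅N, f⁆ * x - 8 * N * y
        - 2 * ⁅N, h⁆ * y := by
        simp only [lie_def]; noncomm_ring
    _ = _ := by rw [hPM, hPh, hPe, hNf, hNh, hN]; noncomm_ring

end Sl2

section Cherednik

variable {A : Type*} [Ring A]

def cherednikD (t e f h x y x₁ y₁ : A) : A :=
  t * (y₁ * x - x₁ * y) - (2 * e * (y₁ * y) + h * (y₁ * x + x₁ * y) - 2 * f * (x₁ * x))

theorem cherednikD_lie_x {t e f h x y x₁ y₁ P N M : A} (htx : ⁅t, x⁆ = x) (hex : ⁅e, x⁆ = 0)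
    (hfx : ⁅f, x⁆ = y) (hhx : ⁅h, x⁆ = x) (hxy : ⁅x, y⁆ = 0) (hy₁x : ⁅y₁, x⁆ = P)
    (hx₁x : ⁅x₁, x⁆ = N) (hx₁y : ⁅x₁, y⁆ = M) :
    ⁅cherednikD t e f h x y x₁ y₁, x⁆ =
      t * (P * x - N * y) + 2 * (N * y - M * x) - 2 * e * (P * y) - h * (P * x + N * y)
        + 2 * f * (N * x) := by
  unfold cherednikD
  have hyx : ⁅y, x⁆ = 0 := by rw [← lie_skew, hxy, neg_zero]
  have hyx₁x : y * (x₁ * x) = x * (x₁ * y) + N * y - M * x := by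
    rw [← hx₁x, ← hx₁y]
    simp only [lie_def, sub_mul, mul_assoc]
    rw [mul_eq_mul_sub_of_lie_eq hyx, sub_zero]
    noncomm_ring
  simp only [sub_lie, add_lie, mul_lie_s13, ofNat_lie, lie_self, htx, hex, hfx, hhx, hyx, hy₁x, hx₁x,
    mul_zero, zero_mul, zero_add, add_zero, mul_assoc]
  rw [hyx₁x]
  noncomm_ring

end Cherednik

theorem lie_mul_add_three_halves_smul {k A : Type*} [Field k] [CharZero k] [Ring A] [Algebra k A]
    {t c x : A} (htx : ⁅t, x⁆ = x) (D : A) :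
    ⁅t * c + ((3 : k) / 2) • c, x⁆ - (c * x + ((1 : k) / 2) • ⁅D, ⁅c, x⁆⁆) =
      t * ⁅c, x⁆ + ((1 : k) / 2) • (⁅c, x⁆ - ⁅D, ⁅c, x⁆⁆) := by
  have hxc : x * c = c * x - ⁅c, x⁆ := by rw [lie_def]; abel
  rw [add_lie, mul_lie_s13, htx, smul_lie, hxc]
  module

end

theorem stmt13_general {k : Type} [Field k] [CharZero k] {A : Type} [Ring A] [Algebra k A]
    (ee ff hh tt xx yy x1 y1 : A) (c fc gc : A)
    (hHE : ⁅hh, ee⁆ = 2*ee) (hHF : ⁅hh, ff⁆ = -(2*ff)) (hEF : ⁅ee, ff⁆ = hh)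
    (hEX : ⁅ee, xx⁆ = 0) (hEY : ⁅ee, yy⁆ = xx)
    (hFX : ⁅ff, xx⁆ = yy) (hFY : ⁅ff, yy⁆ = 0)
    (hHX : ⁅hh, xx⁆ = xx) (hHY : ⁅hh, yy⁆ = -yy)
    (hTX : ⁅tt, xx⁆ = xx)
    (hfcmc : ∀ u ∈ Algebra.adjoin k ({ee, ff, hh, tt} : Set A), fc * u = u * fc)
    (hgcmc : ∀ u ∈ Algebra.adjoin k ({ee, ff, hh, tt} : Set A), gc * u = u * gc)
    (hcx : ⁅c, xx⁆ = (2*hh*fc + gc)*xx + 4*ee*fc*yy)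
    (hXY : ⁅xx, yy⁆ = 0)
    (hY1X : ⁅y1, xx⁆ = 2*hh*fc + gc)
    (hX1X : ⁅x1, xx⁆ = -(4*ee*fc))
    (hX1Y : ⁅x1, yy⁆ = 2*hh*fc - gc)
    :
    ⁅(tt*(y1*xx - x1*yy) - (2*ee*(y1*yy) + hh*(y1*xx + x1*yy) - 2*ff*(x1*xx))), xx⁆ =
      ⁅tt*c + ((3 : k)/2) • c, xx⁆ -
      (c*xx + ((1 : k)/2) • ⁅(4*ff*ee + hh*hh + 2*hh), ⁅c, xx⁆⁆) := by
  have hF (u) (hu : u ∈ ({ee, ff, hh, tt} : Set A)) : Commute fc u :=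
    hfcmc u (Algebra.subset_adjoin hu)
  have hG (u) (hu : u ∈ ({ee, ff, hh, tt} : Set A)) : Commute gc u :=
    hgcmc u (Algebra.subset_adjoin hu)
  have hcx' : ⁅c, xx⁆ = (2*hh*fc + gc) * xx - -(4*ee*fc) * yy := by
    rw [hcx, neg_mul, sub_neg_eq_add, mul_assoc (4 * ee)]
  change ⁅cherednikD tt ee ff hh xx yy x1 y1, xx⁆ = _ - (_ + _ • ⁅casimir ee ff hh, _⁆)
  rw [lie_mul_add_three_halves_smul hTX, hcx',
    sub_casimir_lie_eq hHE hHF hEF hEX hEY hFX hFY hHX hHY (hF ee (by simp)) (hF ff (by simp))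
      (hF hh (by simp)) (hG ee (by simp)) (hG ff (by simp)) (hG hh (by simp)) rfl rfl rfl,
    cherednikD_lie_x hTX hEX hFX hHX hXY hY1X hX1X hX1Y]
  module

theorem stmt13 {k : Type} [Field k] [CharZero k] {A : Type} [Ring A] [Algebra k A]
    (ee ff hh tt xx yy x1 y1 : A) (c fc gc : A)
    (hHE : ⁅hh, ee⁆ = 2*ee) (hHF : ⁅hh, ff⁆ = -(2*ff)) (hEF : ⁅ee, ff⁆ = hh)
    (hTE : ⁅tt, ee⁆ = 0) (hTF : ⁅tt, ff⁆ = 0) (hTH : ⁅tt, hh⁆ = 0)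
    (hEX : ⁅ee, xx⁆ = 0) (hEY : ⁅ee, yy⁆ = xx)
    (hFX : ⁅ff, xx⁆ = yy) (hFY : ⁅ff, yy⁆ = 0)
    (hHX : ⁅hh, xx⁆ = xx) (hHY : ⁅hh, yy⁆ = -yy)
    (hTX : ⁅tt, xx⁆ = xx) (hTY : ⁅tt, yy⁆ = yy)
    (hEX1 : ⁅ee, x1⁆ = 0) (hEY1 : ⁅ee, y1⁆ = x1)
    (hFX1 : ⁅ff, x1⁆ = y1) (hFY1 : ⁅ff, y1⁆ = 0)
    (hHX1 : ⁅hh, x1⁆ = x1) (hHY1 : ⁅hh, y1⁆ = -y1)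
    (hTX1 : ⁅tt, x1⁆ = -x1) (hTY1 : ⁅tt, y1⁆ = -y1)
    (hcmmem : c ∈ Algebra.adjoin k ({ee, ff, hh, tt} : Set A))
    (hcmc : ∀ u ∈ Algebra.adjoin k ({ee, ff, hh, tt} : Set A), c * u = u * c)
    (hfcmmem : fc ∈ Algebra.adjoin k ({ee, ff, hh, tt} : Set A))
    (hfcmc : ∀ u ∈ Algebra.adjoin k ({ee, ff, hh, tt} : Set A), fc * u = u * fc)
    (hgcmmem : gc ∈ Algebra.adjoin k ({ee, ff, hh, tt} : Set A))
    (hgcmc : ∀ u ∈ Algebra.adjoin k ({ee, ff, hh, tt} : Set A), gc * u = u * gc)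
    (hcx : ⁅c, xx⁆ = (2*hh*fc + gc)*xx + 4*ee*fc*yy)
    (hcy : ⁅c, yy⁆ = (-(2*hh*fc) + gc)*yy + 4*ff*fc*xx)
    (hXY : ⁅xx, yy⁆ = 0) (hX1Y1 : ⁅x1, y1⁆ = 0)
    (hY1X : ⁅y1, xx⁆ = 2*hh*fc + gc)
    (hX1X : ⁅x1, xx⁆ = -(4*ee*fc))
    (hY1Y : ⁅y1, yy⁆ = 4*ff*fc)
    (hX1Y : ⁅x1, yy⁆ = 2*hh*fc - gc)
    (hgen : Algebra.adjoin k ({ee, ff, hh, tt, xx, yy, x1, y1} : Set A) = ⊤)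
    (hPBW : LinearIndependent k (fun m : Fin 8 → ℕ =>
      ee ^ m 0 * ff ^ m 1 * hh ^ m 2 * tt ^ m 3 * xx ^ m 4 * yy ^ m 5 * x1 ^ m 6 * y1 ^ m 7))
    :
    ⁅(tt*(y1*xx - x1*yy) - (2*ee*(y1*yy) + hh*(y1*xx + x1*yy) - 2*ff*(x1*xx))), xx⁆ =
      ⁅tt*c + ((3 : k)/2) • c, xx⁆ -
      (c*xx + ((1 : k)/2) • ⁅(4*ff*ee + hh*hh + 2*hh), ⁅c, xx⁆⁆) :=
  stmt13_general ee ff hh tt xx yy x1 y1 c fc gc hHE hHF hEF hEX hEY hFX hFY hHX hHY hTX hfcmc hgcmc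
    hcx hXY hY1X hX1X hX1Y
end
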